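/- Suppose h_e = 0 for all e ∈ E and the nonnegative matrix M with M_{e,f} = c_{e,f}·tanh(β_{e,f}) has spectral radius ρ(M) < 1. Then the zero vector is the unique fixed point of the BP map Φ(z)_e = Σ_f c_{e,f} F_{β_{e,f}}(z_f), and Φ^s(z₀) → 0 for every initialization z₀ ∈ ℝ^E. -/

import Mathlib

noncomputable def artanh (x : ℝ) : ℝ := Real.log ((1 + x) / (1 - x)) / 2

noncomputable def F (β x : ℝ) : ℝ := artanh (Real.tanh β * Real.tanh x)

/-- The zero-field BP map `Φ(z)_e = Σ_f c_{e,f} F_{β_{e,f}}(z_f)`. -/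
noncomputable def BPmap0 {E : Type*} [Fintype E] (c β : E → E → ℝ)
    (z : E → ℝ) : E → ℝ :=
  fun e => ∑ f, c e f * F (β e f) (z f)

/-!
The power series `artanh y = ∑ y ^ (2k+1) / (2k+1)` has nonnegative coefficients, so
`artanh (t * y) ≤ t * artanh y` for `t ∈ [0, 1]` and `y ∈ [0, 1)`; taking `y = tanh x` gives
`|F β x| ≤ tanh β * |x|`. Hence `|Φ z| ≤ M |z|` entrywise, and since `M` is nonnegative this
iterates to `|Φ^[s] z| ≤ M ^ s |z|`. By Gelfand's formula `ρ(M) < 1` forces `M ^ s → 0`, so every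
orbit of `Φ` converges to `0`; a fixed point is its own orbit, hence is `0`.
-/

open Filter Topology Matrix

lemma artanh_neg (y : ℝ) : artanh (-y) = -artanh y := by
  rw [artanh, artanh, ← neg_div, ← Real.log_inv, inv_div]
  ring_nf

lemma artanh_eq_real_artanh {y : ℝ} (hy : y ∈ Set.Icc (-1) 1) : artanh y = Real.artanh y := by
  rw [Real.artanh_eq_half_log hy, artanh]
  ring

lemma artanh_tanh (x : ℝ) : artanh (Real.tanh x) = x := by
  rw [artanh_eq_real_artanh ⟨(Real.neg_one_lt_tanh x).le, (Real.tanh_lt_one x).le⟩,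
    Real.artanh_tanh]

lemma hasSum_artanh {y : ℝ} (hy : |y| < 1) :
    HasSum (fun k : ℕ => y ^ (2 * k + 1) / (2 * k + 1)) (artanh y) := by
  obtain ⟨hy₁, hy₂⟩ := abs_lt.1 hy
  have h := (Real.hasSum_log_sub_log_of_abs_lt_one hy).div_const 2
  rw [← Real.log_div (by linarith) (by linarith)] at h
  exact h.congr_fun fun k => by ring

lemma artanh_nonneg {y : ℝ} (hy₀ : 0 ≤ y) (hy₁ : y < 1) : 0 ≤ artanh y :=
  (hasSum_artanh (abs_lt.2 ⟨by linarith, hy₁⟩)).nonneg fun k => by positivity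

lemma artanh_mul_le {t y : ℝ} (ht₀ : 0 ≤ t) (ht₁ : t ≤ 1) (hy₀ : 0 ≤ y) (hy₁ : y < 1) :
    artanh (t * y) ≤ t * artanh y := by
  have hty : |t * y| < 1 := by
    rw [abs_of_nonneg (by positivity)]; nlinarith
  refine hasSum_le (fun k => ?_) (hasSum_artanh hty)
    ((hasSum_artanh (abs_lt.2 ⟨by linarith, hy₁⟩)).mul_left t)
  rw [mul_pow, ← mul_div_assoc]
  gcongr
  exact pow_le_of_le_one ht₀ ht₁ (by omega)

lemma Real.tanh_nonneg {x : ℝ} (hx : 0 ≤ x) : 0 ≤ Real.tanh x := by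
  rw [Real.tanh_eq_sinh_div_cosh]
  exact div_nonneg (Real.sinh_nonneg_iff.2 hx) (Real.cosh_pos x).le

lemma F_zero (β : ℝ) : F β 0 = 0 := by simp [F, artanh]

lemma F_neg (β x : ℝ) : F β (-x) = -F β x := by
  rw [F, F, Real.tanh_neg, mul_neg, artanh_neg]

lemma abs_F_le {β : ℝ} (hβ : 0 ≤ β) (x : ℝ) : |F β x| ≤ Real.tanh β * |x| := by
  wlog hx : 0 ≤ x generalizing x
  · simpa [F_neg] using this (-x) (by linarith)
  have ht₀ := Real.tanh_nonneg hβ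
  have hx₀ := Real.tanh_nonneg hx
  have hx₁ := Real.tanh_lt_one x
  have hy₁ : Real.tanh β * Real.tanh x < 1 := by nlinarith [Real.tanh_lt_one β]
  rw [abs_of_nonneg hx, F, abs_of_nonneg (artanh_nonneg (by positivity) hy₁)]
  calc artanh (Real.tanh β * Real.tanh x) ≤ Real.tanh β * artanh (Real.tanh x) :=
        artanh_mul_le ht₀ (Real.tanh_lt_one β).le hx₀ hx₁
    _ = Real.tanh β * x := by rw [artanh_tanh]

theorem tendsto_pow_atTop_nhds_zero_of_spectralRadius_lt_one {A : Type*} [NormedRing A]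
    [NormedAlgebra ℂ A] [CompleteSpace A] {a : A} (h : spectralRadius ℂ a < 1) :
    Tendsto (a ^ ·) atTop (𝓝 0) := by
  obtain ⟨r, hρr, hr₁⟩ := ENNReal.lt_iff_exists_nnreal_btwn.1 h
  have hbound : ∀ᶠ n : ℕ in atTop, ‖a ^ n‖ ≤ (r : ℝ) ^ n := by
    have hgelfand := spectrum.pow_nnnorm_pow_one_div_tendsto_nhds_spectralRadius a
    filter_upwards [hgelfand.eventually_lt_const hρr, eventually_ge_atTop 1] with n hn hn₁
    rw [one_div, ENNReal.rpow_inv_lt_iff (by positivity), ENNReal.rpow_natCast] at hn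
    exact_mod_cast hn.le
  exact squeeze_zero_norm' hbound
    (tendsto_pow_atTop_nhds_zero_of_lt_one r.coe_nonneg (by exact_mod_cast hr₁))

section Matrix

variable {n : Type*} [Fintype n] [DecidableEq n]

theorem Matrix.tendsto_pow_of_spectralRadius_lt_one {A : Matrix n n ℂ}
    (h : spectralRadius ℂ A < 1) : Tendsto (A ^ ·) atTop (𝓝 0) := by
  -- The ℓ∞ operator norm induces the product topology, so Gelfand's formula applies.
  let := Matrix.linftyOpNormedRing (n := n) (α := ℂ)
  let := Matrix.linftyOpNormedAlgebra (n := n) (R := ℂ) (α := ℂ)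
  exact tendsto_pow_atTop_nhds_zero_of_spectralRadius_lt_one h

theorem Matrix.tendsto_pow_of_spectralRadius_map_ofReal_lt_one {M : Matrix n n ℝ}
    (h : spectralRadius ℂ (M.map Complex.ofReal) < 1) : Tendsto (M ^ ·) atTop (𝓝 0) := by
  have hre : Continuous fun A : Matrix n n ℂ => A.map Complex.re :=
    continuous_id.matrix_map Complex.continuous_re
  have := (hre.tendsto 0).comp (Matrix.tendsto_pow_of_spectralRadius_lt_one h)
  convert this using 2 with s
  · change M ^ s = (M.map Complex.ofRealHom ^ s).map Complex.re
    rw [← Matrix.map_pow, Matrix.map_map]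
    ext i j
    simp
  · simp

end Matrix

section Domination

variable {E : Type*} [Fintype E]

lemma Matrix.mulVec_mono_of_nonneg {R : Type*} [Semiring R] [PartialOrder R] [IsOrderedRing R]
    {M : Matrix E E R} (hM : ∀ e f, 0 ≤ M e f) {v w : E → R} (hvw : v ≤ w) :
    M *ᵥ v ≤ M *ᵥ w := fun e =>
  Finset.sum_le_sum fun f _ => mul_le_mul_of_nonneg_left (hvw f) (hM e f)

lemma BPmap0_zero (c β : E → E → ℝ) : BPmap0 c β 0 = 0 := by
  funext e
  simp [BPmap0, F_zero]

lemma abs_BPmap0_le_mulVec {c β : E → E → ℝ} (hc : ∀ e f, 0 ≤ c e f) (hβ : ∀ e f, 0 ≤ β e f)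
    {M : Matrix E E ℝ} (hM : ∀ e f, M e f = c e f * Real.tanh (β e f)) (w : E → ℝ) :
    |BPmap0 c β w| ≤ M *ᵥ |w| := fun e =>
  calc |BPmap0 c β w e| ≤ ∑ f, |c e f * F (β e f) (w f)| := Finset.abs_sum_le_sum_abs _ _
    _ ≤ ∑ f, M e f * |w f| := Finset.sum_le_sum fun f _ => by
        rw [abs_mul, abs_of_nonneg (hc e f), hM, mul_assoc]
        exact mul_le_mul_of_nonneg_left (abs_F_le (hβ e f) (w f)) (hc e f)

variable [DecidableEq E] {Φ : (E → ℝ) → E → ℝ} {M : Matrix E E ℝ}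

lemma abs_iterate_le_pow_mulVec (hM : ∀ e f, 0 ≤ M e f) (hΦ : ∀ w, |Φ w| ≤ M *ᵥ |w|)
    (z : E → ℝ) (s : ℕ) : |Φ^[s] z| ≤ (M ^ s) *ᵥ |z| := by
  induction s with
  | zero => simp
  | succ s ih =>
    rw [Function.iterate_succ_apply', pow_succ', ← Matrix.mulVec_mulVec]
    exact (hΦ _).trans (Matrix.mulVec_mono_of_nonneg hM ih)

lemma tendsto_iterate_of_abs_le_mulVec (hM : ∀ e f, 0 ≤ M e f) (hΦ : ∀ w, |Φ w| ≤ M *ᵥ |w|)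
    (hpow : Tendsto (M ^ ·) atTop (𝓝 0)) (z : E → ℝ) :
    Tendsto (Φ^[·] z) atTop (𝓝 0) := by
  have hlim : Tendsto (fun s => (M ^ s) *ᵥ |z|) atTop (𝓝 0) := by
    simpa [Function.comp_def] using
      ((continuous_id.matrix_mulVec continuous_const).tendsto 0).comp hpow
  rw [tendsto_pi_nhds] at hlim ⊢
  exact fun e => squeeze_zero_norm (fun s => abs_iterate_le_pow_mulVec hM hΦ z s e) (hlim e)

end Domination

theorem stmt_13 {E : Type*} [Fintype E] [DecidableEq E] (c β : E → E → ℝ)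
    (hc : ∀ e f, 0 ≤ c e f) (hβ : ∀ e f, 0 ≤ β e f)
    (M : Matrix E E ℝ) (hM : ∀ e f, M e f = c e f * Real.tanh (β e f))
    (hρ : spectralRadius ℂ (M.map (Complex.ofReal)) < 1) :
    BPmap0 c β 0 = 0 ∧
    (∀ z : E → ℝ, BPmap0 c β z = z → z = 0) ∧
    (∀ z₀ : E → ℝ,
      Filter.Tendsto (fun s => (BPmap0 c β)^[s] z₀) Filter.atTop (nhds 0)) := by
  have hM₀ : ∀ e f, 0 ≤ M e f := fun e f =>
    hM e f ▸ mul_nonneg (hc e f) (Real.tanh_nonneg (hβ e f))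
  have hconv : ∀ z₀ : E → ℝ, Tendsto (fun s => (BPmap0 c β)^[s] z₀) atTop (𝓝 0) :=
    tendsto_iterate_of_abs_le_mulVec hM₀ (abs_BPmap0_le_mulVec hc hβ hM)
      (Matrix.tendsto_pow_of_spectralRadius_map_ofReal_lt_one hρ)
  refine ⟨BPmap0_zero c β, fun z hz => ?_, hconv⟩
  exact tendsto_nhds_unique
    (tendsto_const_nhds.congr fun s => (Function.iterate_fixed hz s).symm) (hconv z)
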